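/- Let F be a feasible R-special directed solution. Then for any two distinct terminals v, w ∈ R, either w is v-good or v is w-good (i.e., w ∉ I_v or v ∉ I_w). -/

import Mathlib

/-- `Reach F u v`: there is a directed path of links of `F` from `u` to `v`. -/
def Reach (F : Finset (ℕ × ℕ)) (u v : ℕ) : Prop :=
  Relation.ReflTransGen (fun a b => (a, b) ∈ F) u v

/-- A directed link `(u,v)` enters a cut `C` if `v ∈ C` and `u ∉ C`. -/
def Enters (f : ℕ × ℕ) (C : Set ℕ) : Prop := f.2 ∈ C ∧ f.1 ∉ C

/-- Two directed links cross if their intervals `[a,b]`, `[c,d]` satisfy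
`a < c < b < d` or `c < a < d < b`. -/
def Crosses (f g : ℕ × ℕ) : Prop :=
  (min f.1 f.2 < min g.1 g.2 ∧ min g.1 g.2 < max f.1 f.2 ∧ max f.1 f.2 < max g.1 g.2) ∨
    (min g.1 g.2 < min f.1 f.2 ∧ min f.1 f.2 < max g.1 g.2 ∧ max g.1 g.2 < max f.1 f.2)

/-- `F` is an `R`-special directed solution (with root `r = 0`):
(1) the endpoints of every link are distinct and lie in `R`;
(2) `(R, F)` is an `r`-out arborescence;
(3) no two links of `F` cross;
(4) no two links of `F` leaving the same vertex go in the same direction. -/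
def RSpecial (R : Finset ℕ) (F : Finset (ℕ × ℕ)) : Prop :=
  (∀ f ∈ F, f.1 ≠ f.2 ∧ f.1 ∈ R ∧ f.2 ∈ R) ∧
    (∀ f ∈ F, f.2 ≠ 0) ∧
    (∀ v ∈ R, v ≠ 0 → ∃! f : ℕ × ℕ, f ∈ F ∧ f.2 = v) ∧
    (∀ v ∈ R, Reach F 0 v) ∧
    (∀ f ∈ F, ∀ g ∈ F, f ≠ g → ¬Crosses f g) ∧
    (∀ f ∈ F, ∀ g ∈ F, f ≠ g → f.1 = g.1 →
      ¬((f.1 < f.2 ∧ g.1 < g.2) ∨ (f.2 < f.1 ∧ g.2 < g.1)))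

/-- A ring-cut is an interval `{a, …, b}` with `1 ≤ a ≤ b ≤ n-1`. -/
def IsRingCut (n : ℕ) (C : Set ℕ) : Prop :=
  ∃ a b : ℕ, 1 ≤ a ∧ a ≤ b ∧ b ≤ n - 1 ∧ C = Set.Icc a b

/-- `F` is feasible: every dangerous ring-cut is entered by some link of `F`. -/
def FeasibleDir (n : ℕ) (R : Finset ℕ) (F : Finset (ℕ × ℕ)) : Prop :=
  ∀ C : Set ℕ, IsRingCut n C → (C ∩ ↑R).Nonempty → ∃ f ∈ F, Enters f C

/-- A link `f = (u,v) ∈ F` is responsible for a cut `C` if it enters `C` and no link on the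
unique directed path in `(R,F)` from the root to `u` (i.e. no link of `F` whose head is an
ancestor of `u`) enters `C`. -/
def Responsible (F : Finset (ℕ × ℕ)) (f : ℕ × ℕ) (C : Set ℕ) : Prop :=
  f ∈ F ∧ Enters f C ∧ ∀ g ∈ F, Reach F g.2 f.1 → ¬Enters g C

/-- `[a, b]` is the `v`-bad interval `I_v`: the maximal interval of `V(H)` containing `v`
that contains no terminal which is not a descendant of `v`. -/
def IsBadInterval (n : ℕ) (R : Finset ℕ) (F : Finset (ℕ × ℕ)) (v a b : ℕ) : Prop :=
  a ≤ v ∧ v ≤ b ∧ b ≤ n - 1 ∧ (∀ w ∈ R, a ≤ w → w ≤ b → Reach F v w) ∧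
    ∀ a' b' : ℕ, a' ≤ a → b ≤ b' → b' ≤ n - 1 →
      (∀ w ∈ R, a' ≤ w → w ≤ b' → Reach F v w) → a' = a ∧ b' = b

/-!
Descendance in an arborescence is antisymmetric: a vertex lying on a directed cycle has its
unique parent on that cycle too, so following parents from it never reaches the root, which has
none. Hence if `w` is a descendant of `v ≠ w`, then `v` is not a descendant of `w`, and `v` lies
outside `I_w`, which contains descendants of `w` only.
-/

open Classical in
theorem exists_isBadInterval (n : ℕ) (R : Finset ℕ) (F : Finset (ℕ × ℕ)) {v : ℕ}
    (hv : v ≤ n - 1) : ∃ a b, IsBadInterval n R F v a b := by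
  let Left : ℕ → Prop := fun a => ∀ w ∈ R, a ≤ w → w ≤ v → Reach F v w
  let Right : ℕ → Prop := fun b => ∀ w ∈ R, v ≤ w → w ≤ b → Reach F v w
  have hLeft : Left v := fun w _ h₁ h₂ => le_antisymm h₂ h₁ ▸ Relation.ReflTransGen.refl
  have hRight : Right v := fun w _ h₁ h₂ => le_antisymm h₂ h₁ ▸ Relation.ReflTransGen.refl
  have hex : ∃ a, Left a := ⟨v, hLeft⟩
  have hav : Nat.find hex ≤ v := Nat.find_min' hex hLeft
  have hvb : v ≤ Nat.findGreatest Right (n - 1) := Nat.le_findGreatest hv hRight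
  refine ⟨Nat.find hex, Nat.findGreatest Right (n - 1), hav, hvb, Nat.findGreatest_le _,
    fun w hw h₁ h₂ => ?_, fun a' b' ha' hb' hb'n H => ⟨?_, ?_⟩⟩
  · rcases le_total w v with h | h
    · exact Nat.find_spec hex w hw h₁ h
    · exact Nat.findGreatest_spec hv hRight w hw h h₂
  · exact le_antisymm ha' <| Nat.find_min' hex fun w hw h₁ h₂ =>
      H w hw h₁ (h₂.trans (hvb.trans hb'))
  · exact le_antisymm (Nat.le_findGreatest hb'n fun w hw h₁ h₂ =>
      H w hw ((ha'.trans hav).trans h₁) h₂) hb'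

section Arborescence

variable {F : Finset (ℕ × ℕ)}

theorem not_transGen_self_of_reach_zero
    (hparent : ∀ p q c, (p, c) ∈ F → (q, c) ∈ F → p = q) (hroot : ∀ f ∈ F, f.2 ≠ 0)
    {x : ℕ} (hx : Reach F 0 x) : ¬Relation.TransGen (fun a b => (a, b) ∈ F) x x := by
  induction hx with
  | refl =>
    intro hcycle
    obtain ⟨p, -, hp⟩ := Relation.TransGen.tail'_iff.1 hcycle
    exact hroot _ hp rfl
  | @tail b c _ hbc ih =>
    intro hcycle
    obtain ⟨p, hcp, hpc⟩ := Relation.TransGen.tail'_iff.1 hcycle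
    obtain rfl := hparent p b c hpc hbc
    exact ih (Relation.TransGen.head' hpc hcp)

theorem reach_antisymm_of_reach_zero
    (hparent : ∀ p q c, (p, c) ∈ F → (q, c) ∈ F → p = q) (hroot : ∀ f ∈ F, f.2 ≠ 0)
    {v w : ℕ} (hv : Reach F 0 v) (hvw : Reach F v w) (hwv : Reach F w v) : v = w := by
  by_contra hne
  rcases Relation.reflTransGen_iff_eq_or_transGen.1 hvw with h | h
  · exact hne h.symm
  · exact not_transGen_self_of_reach_zero hparent hroot hv (h.trans_left hwv)

variable {R : Finset ℕ}

theorem RSpecial.fst_eq_of_snd_eq (hsp : RSpecial R F) {p q c : ℕ}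
    (hp : (p, c) ∈ F) (hq : (q, c) ∈ F) : p = q := by
  obtain ⟨hends, hroot, hunique, -⟩ := hsp
  obtain ⟨f, -, hf⟩ := hunique c (hends _ hp).2.2 (hroot _ hp)
  exact congrArg Prod.fst ((hf _ ⟨hp, rfl⟩).trans (hf _ ⟨hq, rfl⟩).symm)

theorem RSpecial.reach_antisymm (hsp : RSpecial R F) {v w : ℕ} (hv : v ∈ R)
    (hvw : Reach F v w) (hwv : Reach F w v) : v = w :=
  reach_antisymm_of_reach_zero (fun _ _ _ => hsp.fst_eq_of_snd_eq) hsp.2.1 (hsp.2.2.2.1 v hv)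
    hvw hwv

end Arborescence

theorem IsBadInterval.notMem_of_not_reach {n : ℕ} {R : Finset ℕ} {F : Finset (ℕ × ℕ)}
    {v a b w : ℕ} (hbad : IsBadInterval n R F v a b) (hw : w ∈ R) (hvw : ¬Reach F v w) :
    w ∉ Set.Icc a b :=
  fun hmem => hvw (hbad.2.2.2.1 w hw hmem.1 hmem.2)

theorem stmt13_general (n : ℕ) (R : Finset ℕ) (hR : R ⊆ Finset.range n)
    (F : Finset (ℕ × ℕ)) (hsp : RSpecial R F) :
    ∀ v ∈ R, ∀ w ∈ R, v ≠ w →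
      (∃ a b : ℕ, IsBadInterval n R F v a b ∧ w ∉ Set.Icc a b) ∨
        (∃ a b : ℕ, IsBadInterval n R F w a b ∧ v ∉ Set.Icc a b) := by
  intro v hv w hw hne
  have hle : ∀ x ∈ R, x ≤ n - 1 := fun x hx =>
    Nat.le_sub_one_of_lt (Finset.mem_range.1 (hR hx))
  by_cases hvw : Reach F v w
  · obtain ⟨a, b, hbad⟩ := exists_isBadInterval n R F (hle w hw)
    exact Or.inr ⟨a, b, hbad, hbad.notMem_of_not_reach hv fun hwv =>
      hne (hsp.reach_antisymm hv hvw hwv)⟩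
  · obtain ⟨a, b, hbad⟩ := exists_isBadInterval n R F (hle v hv)
    exact Or.inl ⟨a, b, hbad, hbad.notMem_of_not_reach hw hvw⟩

/-- For a feasible `R`-special directed solution, for any two distinct terminals `v, w ∈ R`,
either `w` is `v`-good (`w ∉ I_v`) or `v` is `w`-good (`v ∉ I_w`). -/
theorem stmt13 (n : ℕ) (hn : 3 ≤ n) (R : Finset ℕ) (hR : R ⊆ Finset.range n) (hr : 0 ∈ R)
    (F : Finset (ℕ × ℕ)) (hsp : RSpecial R F) (hfeas : FeasibleDir n R F) :
    ∀ v ∈ R, ∀ w ∈ R, v ≠ w →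
      (∃ a b : ℕ, IsBadInterval n R F v a b ∧ w ∉ Set.Icc a b) ∨
        (∃ a b : ℕ, IsBadInterval n R F w a b ∧ v ∉ Set.Icc a b) :=
  stmt13_general n R hR F hsp
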